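/- arXiv:2401.05220 — 3 statements merged into one kernel-verified Lean document; each statement's English description precedes it below -/
import Mathlib

section
/- Consider the metriplectic integrator (x'−x)/h = Π(z)∇̄₂H(x,x') + K_d(z)∇S(z), where z=(x+x')/2, Π(z) is skew-symmetric, K_d(z) is symmetric positive semidefinite, and additionally Π(z)∇S(z)=0 (S is a Casimir) and ∇S = ∇̄₂S on the relevant pairs (e.g. S quadratic). Then S(x') − S(x) ≥ 0. -/
/-!
Pair the scheme with `∇S(z)`. By the discrete-gradient property the left side becomes
`S x' - S x`; skew-symmetry of `Π(z)` together with `Π(z)∇S(z) = 0` kills the conservative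
term, and what remains is `h ⟪∇S(z), K_d(z)∇S(z)⟫ ≥ 0`.
-/

open Matrix

theorem Matrix.dotProduct_mulVec_eq_zero_of_transpose_eq_neg {R ι : Type*} [CommRing R]
    [Fintype ι] {A : Matrix ι ι R} (hA : Aᵀ = -A) {v : ι → R} (hAv : A *ᵥ v = 0) (w : ι → R) :
    v ⬝ᵥ A *ᵥ w = 0 := by
  rw [dotProduct_mulVec, ← mulVec_transpose, hA, neg_mulVec, hAv, neg_zero, zero_dotProduct]

theorem metriplectic_integrator_second_law_general
    {n : ℕ} (S : (Fin n → ℝ) → ℝ)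
    (DGH : (Fin n → ℝ) → (Fin n → ℝ) → (Fin n → ℝ))
    (gradS : (Fin n → ℝ) → (Fin n → ℝ))
    (Pi Kd : (Fin n → ℝ) → Matrix (Fin n) (Fin n) ℝ)
    (hPiskew : ∀ p, (Pi p)ᵀ = -(Pi p))
    (hKdpos : ∀ p v : Fin n → ℝ, 0 ≤ v ⬝ᵥ (Kd p).mulVec v)
    (hPiS : ∀ p, (Pi p).mulVec (gradS p) = 0)
    (h : ℝ) (hh : 0 < h)
    (x x' : Fin n → ℝ)
    -- ∇S = ∇̄₂S at (x, x') (e.g. S quadratic):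
    (hSdg : gradS ((1/2 : ℝ) • (x + x')) ⬝ᵥ (x' - x) = S x' - S x)
    (hscheme : x' - x =
      h • ((Pi ((1/2 : ℝ) • (x + x'))).mulVec (DGH x x') +
           (Kd ((1/2 : ℝ) • (x + x'))).mulVec (gradS ((1/2 : ℝ) • (x + x'))))) :
    0 ≤ S x' - S x := by
  set z := (1/2 : ℝ) • (x + x')
  rw [← hSdg, hscheme, dotProduct_smul, dotProduct_add,
    dotProduct_mulVec_eq_zero_of_transpose_eq_neg (hPiskew z) (hPiS z), zero_add]
  exact smul_nonneg hh.le (hKdpos z (gradS z))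

/-- For the metriplectic integrator
`(x'−x)/h = Π(z)∇̄₂H(x,x') + K_d(z)∇S(z)` with `z = (x+x')/2`, `Π(z)` skew-symmetric,
`K_d(z)` symmetric positive semidefinite, `Π(z)∇S(z) = 0` (S a Casimir), and
`∇S = ∇̄₂S` on the relevant pair (e.g. `S` quadratic), one has `S(x') − S(x) ≥ 0`.
The condition `∇S = ∇̄₂S` is encoded by the discrete-gradient identity
`∇S(z) ⬝ (x'−x) = S(x') − S(x)`. -/
theorem metriplectic_integrator_second_law
    {n : ℕ} (H S : (Fin n → ℝ) → ℝ)
    (DGH : (Fin n → ℝ) → (Fin n → ℝ) → (Fin n → ℝ))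
    (gradS : (Fin n → ℝ) → (Fin n → ℝ))
    (Pi Kd : (Fin n → ℝ) → Matrix (Fin n) (Fin n) ℝ)
    (hPiskew : ∀ p, (Pi p)ᵀ = -(Pi p))
    (hKdsymm : ∀ p, (Kd p)ᵀ = Kd p)
    (hKdpos : ∀ p v : Fin n → ℝ, 0 ≤ v ⬝ᵥ (Kd p).mulVec v)
    (hPiS : ∀ p, (Pi p).mulVec (gradS p) = 0)
    (h : ℝ) (hh : 0 < h)
    (x x' : Fin n → ℝ)
    -- ∇S = ∇̄₂S at (x, x') (e.g. S quadratic):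
    (hSdg : gradS ((1/2 : ℝ) • (x + x')) ⬝ᵥ (x' - x) = S x' - S x)
    (hscheme : x' - x =
      h • ((Pi ((1/2 : ℝ) • (x + x'))).mulVec (DGH x x') +
           (Kd ((1/2 : ℝ) • (x + x'))).mulVec (gradS ((1/2 : ℝ) • (x + x'))))) :
    0 ≤ S x' - S x :=
  metriplectic_integrator_second_law_general S DGH gradS Pi Kd hPiskew hKdpos hPiS h hh x x' hSdg
    hscheme
end

section
/- Let ∇̄₂H(x,x') be the Gonzalez discrete gradient of H and define K_d(df,dg) := G*(∇̄₂H,∇̄₂H)[G*(∇̄₂H,∇̄₂H)G*(df,dg) − G*(∇̄₂H,df)G*(∇̄₂H,dg)] for a positive definite inner product G*. Then K_d is symmetric positive semidefinite and K_d applied to ∇̄₂H vanishes: K_d(∇̄₂H, v) = 0 for all v. Consequently the scheme (x'−x)/h = Π(z)∇̄₂H(x,x') + K_d(z)∇S(z) with Π(z) skew-symmetric satisfies H(x') = H(x). -/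
/-!
The deformed metric `K = c (c G - a aᵀ)`, with `a = G d` and `c = dᵀ G d`, satisfies
`K d = c (c a - c a) = 0`, and its quadratic form `c (c ⟪v, v⟫_G - ⟪v, d⟫_G²)` is nonnegative by
Cauchy–Schwarz for `G`. Along the scheme, `H x' - H x = d ⬝ (x' - x)` by the discrete gradient
property, and `d ⬝ (x' - x) = h (d ⬝ Π d + d ⬝ K ∇S)` vanishes: the first term by skew-symmetry
of `Π`, the second because `K` is symmetric and kills `d`.
-/

open Matrix

variable {ι R : Type*} [Fintype ι] [CommRing R]

namespace Matrix

theorem dotProduct_mulVec_self_eq_zero_of_transpose_eq_neg [IsAddTorsionFree R]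
    {A : Matrix ι ι R} (hA : Aᵀ = -A) (v : ι → R) : v ⬝ᵥ A *ᵥ v = 0 := by
  refine self_eq_neg.mp ?_
  calc v ⬝ᵥ A *ᵥ v = v ⬝ᵥ Aᵀ *ᵥ v := by
        rw [dotProduct_mulVec, ← mulVec_transpose, dotProduct_comm]
    _ = -(v ⬝ᵥ A *ᵥ v) := by rw [hA, neg_mulVec, dotProduct_neg]

theorem dotProduct_mulVec_eq_zero_of_mulVec_eq_zero {A : Matrix ι ι R} (hA : Aᵀ = A)
    {v : ι → R} (hv : A *ᵥ v = 0) (w : ι → R) : v ⬝ᵥ A *ᵥ w = 0 := by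
  rw [dotProduct_mulVec, ← hA, vecMul_transpose, hv, zero_dotProduct]

theorem sq_dotProduct_mulVec_le [LinearOrder R] [IsStrictOrderedRing R] {G : Matrix ι ι R}
    (hG : Gᵀ = G) (hGnonneg : ∀ v, 0 ≤ v ⬝ᵥ G *ᵥ v) (u v : ι → R) :
    (u ⬝ᵥ G *ᵥ v) ^ 2 ≤ (u ⬝ᵥ G *ᵥ u) * (v ⬝ᵥ G *ᵥ v) := by
  classical
  have hsymm : LinearMap.IsSymm (toBilin' G) :=
    LinearMap.BilinForm.isSymm_iff.mp (isSymm_toBilin'_iff_isSymm.mpr hG)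
  simpa only [toBilin'_apply'] using
    (toBilin' G).apply_sq_le_of_symm (by simpa only [toBilin'_apply'] using hGnonneg) hsymm u v

end Matrix

/-- The operator form of the paper's `K_d`, with `d = ∇̄₂H(x, x')`. -/
def deformedMetric (G : Matrix ι ι R) (d : ι → R) : Matrix ι ι R :=
  (d ⬝ᵥ G *ᵥ d) • ((d ⬝ᵥ G *ᵥ d) • G - vecMulVec (G *ᵥ d) (G *ᵥ d))

section deformedMetric

variable {G : Matrix ι ι R} {d : ι → R}

theorem transpose_deformedMetric (hG : Gᵀ = G) : (deformedMetric G d)ᵀ = deformedMetric G d := by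
  rw [deformedMetric, transpose_smul, transpose_sub, transpose_smul, hG, transpose_vecMulVec]

theorem deformedMetric_mulVec (v : ι → R) :
    deformedMetric G d *ᵥ v =
      (d ⬝ᵥ G *ᵥ d) • ((d ⬝ᵥ G *ᵥ d) • G *ᵥ v - ((G *ᵥ d) ⬝ᵥ v) • G *ᵥ d) := by
  rw [deformedMetric, smul_mulVec, sub_mulVec, smul_mulVec, vecMulVec_mulVec, op_smul_eq_smul]

theorem deformedMetric_mulVec_self : deformedMetric G d *ᵥ d = 0 := by
  rw [deformedMetric_mulVec, dotProduct_comm (G *ᵥ d), sub_self, smul_zero]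

theorem dotProduct_deformedMetric_mulVec_nonneg [LinearOrder R] [IsStrictOrderedRing R]
    (hG : Gᵀ = G) (hGnonneg : ∀ v, 0 ≤ v ⬝ᵥ G *ᵥ v) (v : ι → R) : 0 ≤ v ⬝ᵥ deformedMetric G d *ᵥ v := by
  have hcross : (G *ᵥ d) ⬝ᵥ v = v ⬝ᵥ G *ᵥ d := dotProduct_comm _ _
  have hCS := sq_dotProduct_mulVec_le hG hGnonneg v d
  rw [deformedMetric_mulVec, hcross, dotProduct_smul, dotProduct_sub, dotProduct_smul,
    dotProduct_smul, smul_eq_mul, smul_eq_mul, smul_eq_mul]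
  exact mul_nonneg (hGnonneg d) (by nlinarith)

end deformedMetric

theorem generic_integrator_first_law_general
    {n : ℕ} (H : (Fin n → ℝ) → ℝ)
    (Gm : Matrix (Fin n) (Fin n) ℝ)
    (hGsymm : Gmᵀ = Gm)
    (hGpos : ∀ v : Fin n → ℝ, v ≠ 0 → 0 < v ⬝ᵥ Gm.mulVec v)
    (DGH : (Fin n → ℝ) → (Fin n → ℝ) → (Fin n → ℝ))
    -- discrete gradient property of the Gonzalez discrete gradient:
    (hDG : ∀ x x' : Fin n → ℝ, DGH x x' ⬝ᵥ (x' - x) = H x' - H x)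
    (gradS : (Fin n → ℝ) → (Fin n → ℝ))
    (Pi : (Fin n → ℝ) → Matrix (Fin n) (Fin n) ℝ)
    (hPiskew : ∀ p, (Pi p)ᵀ = -(Pi p))
    (h : ℝ) (x x' : Fin n → ℝ)
    (Kd : Matrix (Fin n) (Fin n) ℝ)
    (hKd : Kd = (DGH x x' ⬝ᵥ Gm.mulVec (DGH x x')) •
      ((DGH x x' ⬝ᵥ Gm.mulVec (DGH x x')) • Gm -
        vecMulVec (Gm.mulVec (DGH x x')) (Gm.mulVec (DGH x x'))))
    (hscheme : x' - x =
      h • ((Pi ((1/2 : ℝ) • (x + x'))).mulVec (DGH x x') +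
           Kd.mulVec (gradS ((1/2 : ℝ) • (x + x'))))) :
    Kdᵀ = Kd ∧
    (∀ v : Fin n → ℝ, 0 ≤ v ⬝ᵥ Kd.mulVec v) ∧
    Kd.mulVec (DGH x x') = 0 ∧
    H x' = H x := by
  replace hKd : Kd = deformedMetric Gm (DGH x x') := hKd
  subst hKd
  have hGnonneg (v : Fin n → ℝ) : 0 ≤ v ⬝ᵥ Gm *ᵥ v := by
    rcases eq_or_ne v 0 with rfl | hv
    · rw [zero_dotProduct]
    · exact (hGpos v hv).le
  have hKsymm := transpose_deformedMetric (d := DGH x x') hGsymm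
  have hKkill := deformedMetric_mulVec_self (G := Gm) (d := DGH x x')
  refine ⟨hKsymm, dotProduct_deformedMetric_mulVec_nonneg hGsymm hGnonneg, hKkill, ?_⟩
  rw [← sub_eq_zero, ← hDG, hscheme, dotProduct_smul, dotProduct_add,
    dotProduct_mulVec_self_eq_zero_of_transpose_eq_neg (hPiskew _),
    dotProduct_mulVec_eq_zero_of_mulVec_eq_zero hKsymm hKkill, add_zero, smul_zero]

/-- With `∇̄₂H` the Gonzalez discrete gradient of `H` and
`K_d(df,dg) := G*(∇̄₂H,∇̄₂H)[G*(∇̄₂H,∇̄₂H)G*(df,dg) − G*(∇̄₂H,df)G*(∇̄₂H,dg)]` built from a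
positive definite inner product `G*` (matrix `Gm`, so `G*(u,v) = u ⬝ᵥ Gm v` and the
operator form is `K_d = c(c Gm − a aᵀ)` with `a = Gm ∇̄₂H`, `c = ∇̄₂Hᵀ Gm ∇̄₂H`),
`K_d` is symmetric positive semidefinite and kills `∇̄₂H`; consequently the scheme
`(x'−x)/h = Π(z)∇̄₂H(x,x') + K_d ∇S(z)` with `Π(z)` skew-symmetric preserves `H`. -/
theorem generic_integrator_first_law
    {n : ℕ} (H S : (Fin n → ℝ) → ℝ)
    (Gm : Matrix (Fin n) (Fin n) ℝ)
    (hGsymm : Gmᵀ = Gm)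
    (hGpos : ∀ v : Fin n → ℝ, v ≠ 0 → 0 < v ⬝ᵥ Gm.mulVec v)
    (DGH : (Fin n → ℝ) → (Fin n → ℝ) → (Fin n → ℝ))
    -- discrete gradient property of the Gonzalez discrete gradient:
    (hDG : ∀ x x' : Fin n → ℝ, DGH x x' ⬝ᵥ (x' - x) = H x' - H x)
    (gradS : (Fin n → ℝ) → (Fin n → ℝ))
    (Pi : (Fin n → ℝ) → Matrix (Fin n) (Fin n) ℝ)
    (hPiskew : ∀ p, (Pi p)ᵀ = -(Pi p))
    (h : ℝ) (x x' : Fin n → ℝ)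
    (Kd : Matrix (Fin n) (Fin n) ℝ)
    (hKd : Kd = (DGH x x' ⬝ᵥ Gm.mulVec (DGH x x')) •
      ((DGH x x' ⬝ᵥ Gm.mulVec (DGH x x')) • Gm -
        vecMulVec (Gm.mulVec (DGH x x')) (Gm.mulVec (DGH x x'))))
    (hscheme : x' - x =
      h • ((Pi ((1/2 : ℝ) • (x + x'))).mulVec (DGH x x') +
           Kd.mulVec (gradS ((1/2 : ℝ) • (x + x'))))) :
    Kdᵀ = Kd ∧
    (∀ v : Fin n → ℝ, 0 ≤ v ⬝ᵥ Kd.mulVec v) ∧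
    Kd.mulVec (DGH x x') = 0 ∧
    H x' = H x :=
  generic_integrator_first_law_general H Gm hGsymm hGpos DGH hDG gradS Pi hPiskew h x x' Kd hKd
    hscheme
end

section
/- For the rigid body metriplectic midpoint integrator with z = (p + P)/2: (P−p)/h = Π(z)∇H(z) + K(z)∇S(z) (since H and S are quadratic, their Gonzalez discrete gradients evaluate to gradients at z), one has exactly H(P) = H(p) and S(P) − S(p) = h∇S(z)ᵀK(z)∇S(z) ≥ 0. -/
/-!
Both energies are quadratic, so over a step each changes by its gradient at the midpoint `z`
dotted with `P - p = h (z ⨯₃ ∇H z + K z *ᵥ z)`. The cross product is orthogonal to both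
`z = ∇S z` and `∇H z`, and `∇H z ⬝ᵥ K z *ᵥ w = 0`, leaving `ΔH = 0` and
`ΔS = h z ⬝ᵥ K z *ᵥ z`, which is nonnegative by Cauchy–Schwarz.
-/

open Matrix

section CrossProduct

variable {R : Type*} [CommRing R]

def crossMatrix (q : Fin 3 → R) : Matrix (Fin 3) (Fin 3) R :=
  !![0, -(q 2), q 1;
     q 2, 0, -(q 0);
     -(q 1), q 0, 0]

theorem crossMatrix_mulVec (q v : Fin 3 → R) : crossMatrix q *ᵥ v = q ⨯₃ v := by
  ext i
  fin_cases i <;> simp [crossMatrix, cross_apply, mulVec, dotProduct, Fin.sum_univ_three] <;> ring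

end CrossProduct

section MetricMatrix

variable {R n : Type*} [CommRing R] [Fintype n] [DecidableEq n]

/-- `|g|²` times the orthogonal projection onto `g⊥`. -/
def metricMatrix (g : n → R) : Matrix n n R := (g ⬝ᵥ g) • 1 - vecMulVec g g

theorem dotProduct_metricMatrix_mulVec (g v w : n → R) :
    v ⬝ᵥ metricMatrix g *ᵥ w = (g ⬝ᵥ g) * (v ⬝ᵥ w) - (v ⬝ᵥ g) * (g ⬝ᵥ w) := by
  simp only [metricMatrix, sub_mulVec, smul_mulVec, one_mulVec, vecMulVec_mulVec, op_smul_eq_smul,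
    dotProduct_sub, dotProduct_smul, smul_eq_mul]
  ring

theorem dotProduct_metricMatrix_mulVec_self_left (g w : n → R) :
    g ⬝ᵥ metricMatrix g *ᵥ w = 0 := by
  rw [dotProduct_metricMatrix_mulVec]; ring

theorem dotProduct_metricMatrix_mulVec_self_nonneg (g v : n → ℝ) :
    0 ≤ v ⬝ᵥ metricMatrix g *ᵥ v := by
  have cauchy_schwarz : (g ⬝ᵥ v) ^ 2 ≤ (g ⬝ᵥ g) * (v ⬝ᵥ v) := by
    simpa only [dotProduct, sq] using Finset.sum_mul_sq_le_sq_mul_sq Finset.univ g v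
  rw [dotProduct_metricMatrix_mulVec, dotProduct_comm v g, ← sq]
  exact sub_nonneg.2 cauchy_schwarz

end MetricMatrix

theorem Matrix.IsSymm.quadratic_sub_eq_mulVec_midpoint_dotProduct {n K : Type*} [Fintype n]
    [Field K] {A : Matrix n n K} (hA : A.IsSymm) (p P : n → K) :
    (1/2) * (P ⬝ᵥ A *ᵥ P) - (1/2) * (p ⬝ᵥ A *ᵥ p) = A *ᵥ ((1/2 : K) • (p + P)) ⬝ᵥ (P - p) := by
  have hsymm : A *ᵥ p ⬝ᵥ P = A *ᵥ P ⬝ᵥ p := by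
    rw [dotProduct_comm, dotProduct_mulVec, ← mulVec_transpose, hA.eq]
  rw [mulVec_smul, mulVec_add, smul_dotProduct, add_dotProduct, dotProduct_sub, dotProduct_sub,
    hsymm, dotProduct_comm (A *ᵥ P) P, dotProduct_comm (A *ᵥ p) p, smul_eq_mul]
  ring

theorem rigid_body_metriplectic_integrator_general
    (I₁ I₂ I₃ : ℝ)
    (H S : (Fin 3 → ℝ) → ℝ)
    (hH : ∀ q : Fin 3 → ℝ,
      H q = (1/2 : ℝ) * ((q 0)^2 / I₁ + (q 1)^2 / I₂ + (q 2)^2 / I₃))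
    (hS : ∀ q : Fin 3 → ℝ, S q = (1/2 : ℝ) * ((q 0)^2 + (q 1)^2 + (q 2)^2))
    (gradH : (Fin 3 → ℝ) → (Fin 3 → ℝ))
    (hgradH : ∀ q : Fin 3 → ℝ, gradH q = ![q 0 / I₁, q 1 / I₂, q 2 / I₃])
    (Pi K : (Fin 3 → ℝ) → Matrix (Fin 3) (Fin 3) ℝ)
    (hPi : ∀ q : Fin 3 → ℝ, Pi q =
      !![0, -(q 2), q 1;
         q 2, 0, -(q 0);
         -(q 1), q 0, 0])
    (hK : ∀ q : Fin 3 → ℝ,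
      K q = (gradH q ⬝ᵥ gradH q) • (1 : Matrix (Fin 3) (Fin 3) ℝ)
              - vecMulVec (gradH q) (gradH q))
    (h : ℝ) (hh : 0 < h)
    (p P z : Fin 3 → ℝ) (hz : z = (1/2 : ℝ) • (p + P))
    (hscheme : P - p = h • ((Pi z).mulVec (gradH z) + (K z).mulVec z)) :
    H P = H p ∧
    S P - S p = h * (z ⬝ᵥ (K z).mulVec z) ∧
    0 ≤ h * (z ⬝ᵥ (K z).mulVec z) := by
  set D : Matrix (Fin 3) (Fin 3) ℝ := diagonal ![I₁⁻¹, I₂⁻¹, I₃⁻¹]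
  have hgradH_eq : ∀ q, gradH q = D *ᵥ q := fun q ↦ by
    ext i; fin_cases i <;> simp [hgradH, D, mulVec_diagonal, div_eq_mul_inv, mul_comm]
  have hH_eq : ∀ q, H q = 1/2 * (q ⬝ᵥ D *ᵥ q) := fun q ↦ by
    rw [hH, ← hgradH_eq, hgradH]
    simp only [dotProduct, Fin.sum_univ_three, cons_val_zero, cons_val_one, cons_val]
    ring
  have hS_eq : ∀ q, S q = 1/2 * (q ⬝ᵥ (1 : Matrix (Fin 3) (Fin 3) ℝ) *ᵥ q) := fun q ↦ by
    rw [hS, one_mulVec]; simp only [dotProduct, Fin.sum_univ_three]; ring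
  have hKz : K z = metricMatrix (gradH z) := hK z
  have hstep : P - p = h • (z ⨯₃ gradH z + K z *ᵥ z) := by
    rw [hscheme, hPi, ← crossMatrix_mulVec]; rfl
  refine ⟨?_, ?_, ?_⟩
  · rw [← sub_eq_zero, hH_eq, hH_eq, (isSymm_diagonal _).quadratic_sub_eq_mulVec_midpoint_dotProduct,
      ← hz, ← hgradH_eq, hstep, dotProduct_smul, dotProduct_add, dot_cross_self, hKz,
      dotProduct_metricMatrix_mulVec_self_left, add_zero, smul_zero]
  · rw [hS_eq, hS_eq, isSymm_one.quadratic_sub_eq_mulVec_midpoint_dotProduct, one_mulVec, ← hz,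
      hstep, dotProduct_smul, dotProduct_add, dot_self_cross, zero_add, smul_eq_mul]
  · exact mul_nonneg hh.le (hKz ▸ dotProduct_metricMatrix_mulVec_self_nonneg _ _)

/-- For the rigid body metriplectic midpoint integrator with `z = (p+P)/2`:
`(P−p)/h = Π(z)∇H(z) + K(z)∇S(z)` (since `H` and `S` are quadratic their Gonzalez discrete
gradients evaluate to gradients at `z`; `∇S(z) = z`), one has exactly `H(P) = H(p)` and
`S(P) − S(p) = h ∇S(z)ᵀK(z)∇S(z) ≥ 0`. -/
theorem rigid_body_metriplectic_integrator
    (I₁ I₂ I₃ : ℝ) (hI₁ : 0 < I₁) (hI₂ : 0 < I₂) (hI₃ : 0 < I₃)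
    (H S : (Fin 3 → ℝ) → ℝ)
    (hH : ∀ q : Fin 3 → ℝ,
      H q = (1/2 : ℝ) * ((q 0)^2 / I₁ + (q 1)^2 / I₂ + (q 2)^2 / I₃))
    (hS : ∀ q : Fin 3 → ℝ, S q = (1/2 : ℝ) * ((q 0)^2 + (q 1)^2 + (q 2)^2))
    (gradH : (Fin 3 → ℝ) → (Fin 3 → ℝ))
    (hgradH : ∀ q : Fin 3 → ℝ, gradH q = ![q 0 / I₁, q 1 / I₂, q 2 / I₃])
    (Pi K : (Fin 3 → ℝ) → Matrix (Fin 3) (Fin 3) ℝ)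
    (hPi : ∀ q : Fin 3 → ℝ, Pi q =
      !![0, -(q 2), q 1;
         q 2, 0, -(q 0);
         -(q 1), q 0, 0])
    (hK : ∀ q : Fin 3 → ℝ,
      K q = (gradH q ⬝ᵥ gradH q) • (1 : Matrix (Fin 3) (Fin 3) ℝ)
              - vecMulVec (gradH q) (gradH q))
    (h : ℝ) (hh : 0 < h)
    (p P z : Fin 3 → ℝ) (hz : z = (1/2 : ℝ) • (p + P))
    (hscheme : P - p = h • ((Pi z).mulVec (gradH z) + (K z).mulVec z)) :
    H P = H p ∧
    S P - S p = h * (z ⬝ᵥ (K z).mulVec z) ∧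
    0 ≤ h * (z ⬝ᵥ (K z).mulVec z) :=
  rigid_body_metriplectic_integrator_general I₁ I₂ I₃ H S hH hS gradH hgradH Pi K hPi hK h hh p P z
    hz hscheme
end
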